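/- Let X, Y be invertible matrices and ν real. Then (X ⓢ_ν Y)⁻¹ = (X*)⁻¹ ⓢ_ν (Y*)⁻¹, and (X⁻¹) ⓢ_ν (Y⁻¹) = (X* ⓢ_ν Y*)⁻¹. -/

import Mathlib

open Matrix ComplexOrder

/-- Real power of a Hermitian matrix via the spectral theorem (functional calculus);
junk value `0` for non-Hermitian matrices. -/
noncomputable def Matrix.hrpow {n : ℕ} (A : Matrix (Fin n) (Fin n) ℂ) (r : ℝ) :
    Matrix (Fin n) (Fin n) ℂ :=
  if h : A.IsHermitian then
    (h.eigenvectorUnitary : Matrix (Fin n) (Fin n) ℂ) *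
      Matrix.diagonal (fun i => ((h.eigenvalues i ^ r : ℝ) : ℂ)) *
      (h.eigenvectorUnitary : Matrix (Fin n) (Fin n) ℂ)ᴴ
  else 0

/-- Weighted geometric mean `A #_ν B` of positive definite matrices:
`A^{1/2} (A^{-1/2} B A^{-1/2})^ν A^{1/2}`. -/
noncomputable def Matrix.gmean {n : ℕ} (A B : Matrix (Fin n) (Fin n) ℂ) (ν : ℝ) :
    Matrix (Fin n) (Fin n) ℂ :=
  A.hrpow (1/2) * ((A.hrpow (-(1/2)) * B * A.hrpow (-(1/2))).hrpow ν) * A.hrpow (1/2)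

/-- Quadratic weighted geometric mean `X ⓢ_ν Y = X* (|Y X⁻¹|²)^ν X`. -/
noncomputable def Matrix.qgmean {n : ℕ} (X Y : Matrix (Fin n) (Fin n) ℂ) (ν : ℝ) :
    Matrix (Fin n) (Fin n) ℂ :=
  Xᴴ * ((Y * X⁻¹)ᴴ * (Y * X⁻¹)).hrpow ν * X


/-! For positive definite `P`, functional calculus on its positive spectrum gives
`(P ^ ν)⁻¹ = P ^ (-ν) = (P⁻¹) ^ ν`. With `P = |Y X⁻¹|²`, the matrix attached to the pair
`((X*)⁻¹, (Y*)⁻¹)` is `|(Y*)⁻¹ X*|² = P⁻¹`, so inverting `X* P^ν X` gives `X⁻¹ (P⁻¹)^ν (X*)⁻¹`,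
which is `(X*)⁻¹ ⓢ_ν (Y*)⁻¹`. The second identity is the first one applied to `X*, Y*`. -/

namespace Matrix

variable {n : ℕ}

lemma IsHermitian.hrpow_eq_cfc {A : Matrix (Fin n) (Fin n) ℂ} (hA : A.IsHermitian) (r : ℝ) :
    A.hrpow r = cfc (fun x : ℝ => x ^ r) A := by
  rw [hA.cfc_eq, hrpow, dif_pos hA, IsHermitian.cfc]
  rfl

lemma PosDef.spectrum_pos {P : Matrix (Fin n) (Fin n) ℂ} (hP : P.PosDef) {x : ℝ}
    (hx : x ∈ spectrum ℝ P) : 0 < x := by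
  rw [hP.isHermitian.spectrum_real_eq_range_eigenvalues] at hx
  obtain ⟨i, rfl⟩ := hx
  exact hP.eigenvalues_pos i

lemma PosDef.hrpow_neg {P : Matrix (Fin n) (Fin n) ℂ} (hP : P.PosDef) (r : ℝ) :
    P.hrpow (-r) = (P.hrpow r)⁻¹ := by
  have hsa : IsSelfAdjoint P := hP.isHermitian
  rw [hP.isHermitian.hrpow_eq_cfc, hP.isHermitian.hrpow_eq_cfc, nonsing_inv_eq_ringInverse]
  exact (cfc_congr fun x hx => Real.rpow_neg (hP.spectrum_pos hx).le r).trans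
    (cfc_inv _ _ (fun x hx => (Real.rpow_pos_of_pos (hP.spectrum_pos hx) r).ne')
      (P.finite_real_spectrum.continuousOn _) hsa)

lemma PosDef.inv_hrpow {P : Matrix (Fin n) (Fin n) ℂ} (hP : P.PosDef) (r : ℝ) :
    P⁻¹.hrpow r = P.hrpow (-r) := by
  have hsa : IsSelfAdjoint P := hP.isHermitian
  rw [hP.isHermitian.inv.hrpow_eq_cfc, hP.isHermitian.hrpow_eq_cfc, nonsing_inv_eq_ringInverse,
    ← cfc_ringInverse_id (R := ℝ) P hP.isUnit hsa,
    ← cfc_comp' (fun x : ℝ => x ^ r) (fun x : ℝ => x⁻¹) P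
      ((P.finite_real_spectrum.image _).continuousOn _) (P.finite_real_spectrum.continuousOn _) hsa]
  exact cfc_congr fun x hx => by
    rw [Real.rpow_neg (hP.spectrum_pos hx).le, Real.inv_rpow (hP.spectrum_pos hx).le]

lemma qgmean_inv {X Y : Matrix (Fin n) (Fin n) ℂ} (hX : IsUnit X) (hY : IsUnit Y) (ν : ℝ) :
    (X.qgmean Y ν)⁻¹ = (Xᴴ)⁻¹.qgmean ((Yᴴ)⁻¹) ν := by
  have hP : ((Y * X⁻¹)ᴴ * (Y * X⁻¹)).PosDef := .conjTranspose_mul_self _ <|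
    mulVec_injective_iff_isUnit.mpr (hY.mul (isUnit_nonsing_inv_iff.mpr hX))
  have hXdet : IsUnit X.det := (isUnit_iff_isUnit_det X).mp hX
  have hQ : ((Yᴴ)⁻¹ * (Xᴴ)⁻¹⁻¹)ᴴ * ((Yᴴ)⁻¹ * (Xᴴ)⁻¹⁻¹) = ((Y * X⁻¹)ᴴ * (Y * X⁻¹))⁻¹ := by
    simp only [mul_inv_rev, ← conjTranspose_nonsing_inv, nonsing_inv_nonsing_inv _ hXdet,
      conjTranspose_mul, conjTranspose_conjTranspose, Matrix.mul_assoc]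
  rw [qgmean, qgmean, mul_inv_rev, mul_inv_rev, hQ, hP.inv_hrpow, ← hP.hrpow_neg,
    ← conjTranspose_nonsing_inv, conjTranspose_conjTranspose, Matrix.mul_assoc]

end Matrix

theorem stmt_15 {n : ℕ} (X Y : Matrix (Fin n) (Fin n) ℂ)
    (hX : IsUnit X) (hY : IsUnit Y) (ν : ℝ) :
    (X.qgmean Y ν)⁻¹ = (Xᴴ)⁻¹.qgmean ((Yᴴ)⁻¹) ν ∧
      (X⁻¹).qgmean (Y⁻¹) ν = ((Xᴴ).qgmean (Yᴴ) ν)⁻¹ := by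
  refine ⟨qgmean_inv hX hY ν, ?_⟩
  simpa only [conjTranspose_conjTranspose] using
    (qgmean_inv ((isUnit_conjTranspose X).mpr hX) ((isUnit_conjTranspose Y).mpr hY) ν).symm
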